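/- arXiv:1905.04933 — 3 statements merged into one kernel-verified Lean document; each statement's English description precedes it below -/
import Mathlib

section
/- Let C be a finite set of candidates, PW = {pw_1,…,pw_l} ⊆ C a set of possible winners with l ≥ 2, and P a preference order on C with P(pw_a,pw_b) if and only if a < b. Let P' be a preference order on C such that: (i) P'(pw_a,pw_{a+1}) for all a ∈ {1,…,l−1}; (ii) |[pw_a, P', pw_{a+1}]| ≥ |[pw_a, P, pw_{a+1}]| for all a ∈ {1,…,l−1}; and (iii) there exists a ∈ {1,…,l−1} with |[pw_a, P', pw_{a+1}]| > |[pw_a, P, pw_{a+1}]|. Then P' locally dominates P (given PW). -/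
/-- A preference order: a strict total order on candidates. -/
def IsPref {C : Type*} (P : C → C → Prop) : Prop :=
  (∀ a b : C, a ≠ b → P a b ∨ P b a) ∧ (∀ a : C, ¬ P a a) ∧
    ∀ a b c : C, P a b → P b c → P a c

/-- The Borda score that preference order `P` gives candidate `c`. -/
noncomputable def borda {C : Type*} [Fintype C] (P : C → C → Prop) (c : C) : ℕ :=
  1 + Set.ncard {c' : C | P c c'}

/-- `c` is the outcome `F(s, P)`: it beats every other candidate either in total score
`s + borda`, or on equal total score by the tie-breaking order `tb`. -/
def IsWinner {C : Type*} [Fintype C] (tb : C → C → Prop) (s : C → ℕ)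
    (P : C → C → Prop) (c : C) : Prop :=
  ∀ c' : C, c' ≠ c →
    s c' + borda P c' < s c + borda P c ∨
      (s c' + borda P c' = s c + borda P c ∧ tb c c')

/-- `s` is a possible world for the set `PW` of possible winners. -/
def PossibleWorld {C : Type*} [Fintype C] (tb : C → C → Prop) (PW : Set C)
    (s : C → ℕ) : Prop :=
  ∀ R : C → C → Prop, IsPref R → ∀ c : C, IsWinner tb s R c → c ∈ PW

/-- `P'` locally dominates `P` given the possible-winner set `PW`. -/
def LocDom {C : Type*} [Fintype C] (tb : C → C → Prop) (PW : Set C)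
    (P' P : C → C → Prop) : Prop :=
  (∀ s : C → ℕ, PossibleWorld tb PW s →
      ∀ w' w : C, IsWinner tb s P' w' → IsWinner tb s P w → w' = w ∨ P w' w) ∧
  ∃ s : C → ℕ, PossibleWorld tb PW s ∧
      ∃ w' w : C, IsWinner tb s P' w' ∧ IsWinner tb s P w ∧ P w' w

/-- The (closed) segment `[c, P, c']` of candidates between `c` and `c'`. -/
def seg {C : Type*} (P : C → C → Prop) (c c' : C) : Set C :=
  {d : C | (d = c ∨ P c d) ∧ (d = c' ∨ P d c')}

lemma borda_pos {C : Type*} [Fintype C] (P : C → C → Prop) (c : C) : 1 ≤ borda P c :=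
  Nat.le_add_right 1 _

lemma borda_le {C : Type*} [Fintype C] {R : C → C → Prop}
    (hirr : ∀ a : C, ¬ R a a) (c : C) : borda R c ≤ Fintype.card C := by
  have h1 : (insert c {c' : C | R c c'}).ncard = {c' : C | R c c'}.ncard + 1 :=
    Set.ncard_insert_of_notMem (by simpa using hirr c) (Set.toFinite _)
  have h2 : (insert c {c' : C | R c c'}).ncard ≤ (Set.univ : Set C).ncard :=
    Set.ncard_le_ncard (Set.subset_univ _) (Set.toFinite _)
  rw [Set.ncard_univ, Nat.card_eq_fintype_card] at h2
  unfold borda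
  omega

lemma seg_card {C : Type*} [Fintype C] {P : C → C → Prop} (hP : IsPref P) {c c' : C}
    (h : P c c') : borda P c' + (seg P c c').ncard = borda P c + 1 := by
  obtain ⟨htot, hirr, htr⟩ := hP
  have hmem : c ∈ seg P c c' := ⟨Or.inl rfl, Or.inr h⟩
  have hsplit : {d : C | P c d} = {d : C | P c' d} ∪ (seg P c c' \ {c}) := by
    ext d
    simp only [Set.mem_setOf_eq, Set.mem_union, Set.mem_diff, Set.mem_singleton_iff, seg]
    constructor
    · intro hcd
      have hdc : d ≠ c := fun h' => hirr c (h' ▸ hcd)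
      by_cases hdc' : d = c'
      · right; exact ⟨⟨Or.inr hcd, Or.inl hdc'⟩, hdc⟩
      · rcases htot d c' hdc' with h1 | h1
        · right; exact ⟨⟨Or.inr hcd, Or.inr h1⟩, hdc⟩
        · left; exact h1
    · rintro (h1 | ⟨⟨h2, h3⟩, h4⟩)
      · exact htr _ _ _ h h1
      · rcases h2 with rfl | h2
        · exact absurd rfl h4
        · exact h2
  have hdisj : Disjoint {d : C | P c' d} (seg P c c' \ {c}) := by
    rw [Set.disjoint_left]
    rintro d hd ⟨⟨h2, h3⟩, h4⟩
    rcases h3 with rfl | h3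
    · exact hirr d hd
    · exact hirr c' (htr _ _ _ hd h3)
  have hcard : {d : C | P c d}.ncard = {d : C | P c' d}.ncard + (seg P c c' \ {c}).ncard := by
    rw [hsplit, Set.ncard_union_eq hdisj (Set.toFinite _) (Set.toFinite _)]
  have hdcard : (seg P c c' \ {c}).ncard + 1 = (seg P c c').ncard :=
    Set.ncard_diff_singleton_add_one hmem (Set.toFinite _)
  unfold borda
  omega

lemma chainN (l : ℕ) (B B' : ℕ → ℕ)
    (hstep : ∀ a, a + 1 < l → B a + B' (a + 1) ≤ B' a + B (a + 1)) :
    ∀ a b, a ≤ b → b < l → B a + B' b ≤ B' a + B b := by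
  intro a b hab
  obtain ⟨d, rfl⟩ := Nat.exists_eq_add_of_le hab
  clear hab
  induction d with
  | zero => intro _; simp [Nat.add_comm]
  | succ d ih =>
    intro hb
    have h1 := ih (by omega)
    have h2 := hstep (a + d) (by omega)
    simp only [← Nat.add_assoc] at h1 h2 ⊢
    omega

lemma chainFin {C : Type*} [Fintype C] {l : ℕ} (pw : Fin l → C) (P P' : C → C → Prop)
    (hstep : ∀ a : ℕ, ∀ h : a + 1 < l,
      borda P (pw ⟨a, Nat.lt_of_succ_lt h⟩) + borda P' (pw ⟨a + 1, h⟩) ≤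
        borda P' (pw ⟨a, Nat.lt_of_succ_lt h⟩) + borda P (pw ⟨a + 1, h⟩)) :
    ∀ i j : Fin l, i ≤ j →
      borda P (pw i) + borda P' (pw j) ≤ borda P' (pw i) + borda P (pw j) := by
  have key := chainN l
    (fun a => if ha : a < l then borda P (pw ⟨a, ha⟩) else 0)
    (fun a => if ha : a < l then borda P' (pw ⟨a, ha⟩) else 0)
    (by
      intro a ha
      have h1 : a < l := by omega
      simp only [dif_pos h1, dif_pos ha]
      exact hstep a ha)
  intro i j hij
  have hh := key i.val j.val hij j.isLt
  simp only [dif_pos i.isLt, dif_pos j.isLt, Fin.eta] at hh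
  exact hh

lemma exists_strict_world {C : Type*} [Fintype C] (tb P P' : C → C → Prop)
    (htb : IsPref tb) (hP : IsPref P) (hP' : IsPref P')
    (PW : Set C) (x y : C) (hx : x ∈ PW) (hy : y ∈ PW) (hne : x ≠ y)
    (hkey : borda P x + borda P' y + 1 ≤ borda P' x + borda P y) :
    ∃ s : C → ℕ, PossibleWorld tb PW s ∧ IsWinner tb s P' x ∧ IsWinner tb s P y := by
  classical
  have hBx : borda P x ≤ Fintype.card C := borda_le hP.2.1 _
  have hBy : borda P y ≤ Fintype.card C := borda_le hP.2.1 _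
  have hB'x : borda P' x ≤ Fintype.card C := borda_le hP'.2.1 _
  have hB'y : borda P' y ≤ Fintype.card C := borda_le hP'.2.1 _
  have hBx1 : 1 ≤ borda P x := borda_pos P _
  have hBy1 : 1 ≤ borda P y := borda_pos P _
  have hB'x1 : 1 ≤ borda P' x := borda_pos P' _
  have hB'y1 : 1 ≤ borda P' y := borda_pos P' _
  have main : ∀ ε : ℕ, ε ≤ 1 → (ε = 0 → tb y x) → (ε = 1 → tb x y) →
      ∃ s : C → ℕ, PossibleWorld tb PW s ∧ IsWinner tb s P' x ∧ IsWinner tb s P y := by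
    intro ε hε h0 h1
    obtain ⟨s, hsdef⟩ : ∃ s : C → ℕ, s = fun c =>
        if c = x then 6 * (Fintype.card C + 2) - ε - borda P x
        else if c = y then 6 * (Fintype.card C + 2) - borda P y
        else if c ∈ PW then 3 * (Fintype.card C + 2) else 0 := ⟨_, rfl⟩
    have hsx : s x = 6 * (Fintype.card C + 2) - ε - borda P x := by simp [hsdef]
    have hsy : s y = 6 * (Fintype.card C + 2) - borda P y := by
      simp [hsdef, Ne.symm hne]
    have hsoth : ∀ c : C, c ≠ x → c ≠ y → c ∈ PW →
        s c = 3 * (Fintype.card C + 2) := by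
      intro c h1 h2 h3; simp [hsdef, h1, h2, h3]
    have hsout : ∀ c : C, c ≠ x → c ≠ y → c ∉ PW → s c = 0 := by
      intro c h1 h2 h3; simp [hsdef, h1, h2, h3]
    refine ⟨s, ?_, ?_, ?_⟩
    · -- possible world
      intro R hR c hc
      by_contra hcr
      have hbc : borda R c ≤ Fintype.card C := borda_le hR.2.1 c
      have hbx1 : 1 ≤ borda R x := borda_pos R _
      have hxc : x ≠ c := fun hh => hcr (hh ▸ hx)
      have hcx : c ≠ x := Ne.symm hxc
      have hcy : c ≠ y := fun hh => hcr (hh ▸ hy)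
      have hcmp := hc x hxc
      rw [hsx, hsout c hcx hcy hcr] at hcmp
      rcases hcmp with hcmp | ⟨hcmp, _⟩ <;> omega
    · -- x wins under P'
      intro c' hc'
      by_cases hy' : c' = y
      · rw [hy', hsx, hsy]
        rcases Nat.lt_or_ge
            (6 * (Fintype.card C + 2) - borda P y + borda P' y)
            (6 * (Fintype.card C + 2) - ε - borda P x + borda P' x) with hlt | hge
        · left; exact hlt
        · by_cases hε0 : ε = 0
          · exfalso; omega
          · right; exact ⟨by omega, h1 (by omega)⟩
      · have hbc : borda P' c' ≤ Fintype.card C := borda_le hP'.2.1 c'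
        by_cases hPW' : c' ∈ PW
        · left; rw [hsx, hsoth c' hc' hy' hPW']; omega
        · left; rw [hsx, hsout c' hc' hy' hPW']; omega
    · -- y wins under P
      intro c' hc'
      by_cases hx' : c' = x
      · rw [hx', hsx, hsy]
        by_cases hε0 : ε = 0
        · right; exact ⟨by omega, h0 hε0⟩
        · left; omega
      · have hbc : borda P c' ≤ Fintype.card C := borda_le hP.2.1 c'
        by_cases hPW' : c' ∈ PW
        · left; rw [hsy, hsoth c' hx' hc' hPW']; omega
        · left; rw [hsy, hsout c' hx' hc' hPW']; omega
  rcases htb.1 x y hne with htbc | htbc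
  · exact main 1 (le_refl 1) (fun hh => absurd hh one_ne_zero) (fun _ => htbc)
  · exact main 0 (by omega) (fun _ => htbc) (fun hh => absurd hh.symm one_ne_zero)

set_option maxHeartbeats 1000000 in
theorem statement4 {C : Type*} [Fintype C]
    (tb : C → C → Prop) (htb : IsPref tb)
    (l : ℕ) (hl : 2 ≤ l) (pw : Fin l → C) (hinj : Function.Injective pw)
    (P P' : C → C → Prop) (hP : IsPref P) (hP' : IsPref P')
    (horder : ∀ a b : Fin l, P (pw a) (pw b) ↔ a < b)
    (horder' : ∀ a : ℕ, ∀ h : a + 1 < l, P' (pw ⟨a, by omega⟩) (pw ⟨a + 1, h⟩))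
    (hsize : ∀ a : ℕ, ∀ h : a + 1 < l,
      (seg P (pw ⟨a, by omega⟩) (pw ⟨a + 1, h⟩)).ncard ≤
        (seg P' (pw ⟨a, by omega⟩) (pw ⟨a + 1, h⟩)).ncard)
    (hgrow : ∃ a : ℕ, ∃ h : a + 1 < l,
      (seg P (pw ⟨a, by omega⟩) (pw ⟨a + 1, h⟩)).ncard <
        (seg P' (pw ⟨a, by omega⟩) (pw ⟨a + 1, h⟩)).ncard) :
    LocDom tb (Set.range pw) P' P := by
  classical
  have htbasym : ∀ x y : C, tb x y → tb y x → False := fun x y h1 h2 =>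
    htb.2.1 x (htb.2.2 x y x h1 h2)
  have hgap : ∀ a : ℕ, ∀ h : a + 1 < l,
      borda P (pw ⟨a, by omega⟩) + borda P' (pw ⟨a + 1, h⟩) ≤
        borda P' (pw ⟨a, by omega⟩) + borda P (pw ⟨a + 1, h⟩) := by
    intro a h
    have hPa : P (pw ⟨a, by omega⟩) (pw ⟨a + 1, h⟩) :=
      (horder _ _).mpr (by simp [Fin.lt_def])
    have hP'a : P' (pw ⟨a, by omega⟩) (pw ⟨a + 1, h⟩) := horder' a h
    have e1 := seg_card hP hPa
    have e2 := seg_card hP' hP'a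
    have e3 : (seg P (pw ⟨a, by omega⟩) (pw ⟨a + 1, h⟩)).ncard ≤
        (seg P' (pw ⟨a, by omega⟩) (pw ⟨a + 1, h⟩)).ncard := hsize a h
    omega
  have hchain := chainFin pw P P' hgap
  constructor
  · -- weak dominance in every possible world
    intro s hs w' w hw' hw
    obtain ⟨j, hj⟩ := hs P' hP' w' hw'
    obtain ⟨i, hi⟩ := hs P hP w hw
    rcases lt_trichotomy j.val i.val with hji | hji | hji
    · right
      rw [← hi, ← hj]
      exact (horder j i).mpr (Fin.lt_def.mpr hji)
    · left
      rw [← hi, ← hj]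
      exact congrArg pw (Fin.ext hji)
    · exfalso
      have hne : w' ≠ w := by
        rw [← hi, ← hj]
        intro hh
        have h2 : j = i := hinj hh
        rw [Fin.ext_iff] at h2
        omega
      have h1 := hw w' hne
      have h2 := hw' w (Ne.symm hne)
      have hc := hchain i j (le_of_lt (Fin.lt_def.mpr hji))
      rw [hi, hj] at hc
      rcases h1 with h1 | ⟨h1e, h1t⟩ <;> rcases h2 with h2 | ⟨h2e, h2t⟩
      · omega
      · omega
      · omega
      · exact htbasym w w' h1t h2t
  · -- a possible world where P' does strictly better
    obtain ⟨a, h, hgr⟩ := hgrow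
    have hal : a < l := by omega
    have hPij : P (pw ⟨a, hal⟩) (pw ⟨a + 1, h⟩) :=
      (horder _ _).mpr (by simp [Fin.lt_def])
    have hP'ij : P' (pw ⟨a, hal⟩) (pw ⟨a + 1, h⟩) := horder' a h
    have hgr' : (seg P (pw ⟨a, hal⟩) (pw ⟨a + 1, h⟩)).ncard <
        (seg P' (pw ⟨a, hal⟩) (pw ⟨a + 1, h⟩)).ncard := hgr
    have e1 := seg_card hP hPij
    have e2 := seg_card hP' hP'ij
    have hkey : borda P (pw ⟨a, hal⟩) + borda P' (pw ⟨a + 1, h⟩) + 1 ≤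
        borda P' (pw ⟨a, hal⟩) + borda P (pw ⟨a + 1, h⟩) := by omega
    have hne : pw ⟨a, hal⟩ ≠ pw ⟨a + 1, h⟩ := by
      intro hh
      have h2 : a = a + 1 := by simpa using hinj hh
      omega
    obtain ⟨s, hPW, hw', hw⟩ := exists_strict_world tb P P' htb hP hP' (Set.range pw)
      (pw ⟨a, hal⟩) (pw ⟨a + 1, h⟩) ⟨_, rfl⟩ ⟨_, rfl⟩ hne hkey
    exact ⟨s, hPW, pw ⟨a, hal⟩, pw ⟨a + 1, h⟩, hw', hw, hPij⟩
end

section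
/- Assume the Common Givens: P_i is a preference order on C consistent with Q; the query is the pair (c_j,c_k) with P_i(c_j,c_k); neither (c_j,c_k) nor (c_k,c_j) belongs to Q; and PW = {pw_1,…,pw_l} is a nonempty set of possible winners enumerated in decreasing order of P_i, i.e. P_i(pw_a,pw_b) if and only if a < b. Suppose there exists a preference order P' ≠ P_i such that P' locally dominates P_i (given PW) and P' ∈ μ(P_i). Then one of the following three cases holds in P_i: (1) P_i(c_j,pw_1) and P_i(pw_l,c_k); or (2) P_i(c_j,pw_1) and c_k ∈ [pw_1, P_i, pw_l]; or (3) P_i(pw_l,c_k) and c_j ∈ [pw_1, P_i, pw_l]. -/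
/-- `Q` is a strict partial order (consistent, transitively closed reported preferences). -/
def IsSPO {C : Type*} (Q : C → C → Prop) : Prop :=
  (∀ a : C, ¬ Q a a) ∧ ∀ a b c : C, Q a b → Q b c → Q a c

/-- `P` is consistent with (extends) the reported preferences `Q`, written `P ⊨ Q`. -/
def Extends {C : Type*} (P Q : C → C → Prop) : Prop := ∀ a b : C, Q a b → P a b

/-- The swap distance between two preference orders: the number of (unordered) pairs of
candidates ordered differently, counted here as ordered pairs `(a, b)` with
`P a b` and `P' b a`. -/
noncomputable def dswap {C : Type*} [Fintype C] (P P' : C → C → Prop) : ℕ :=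
  Set.ncard {p : C × C | P p.1 p.2 ∧ P' p.2 p.1}

/-- `P` is a preference order consistent with the transitive closure of `Q ∪ {(ck, cj)}`
(for a transitive total order this is the same as extending `Q` and putting `ck` above `cj`). -/
def Feasible {C : Type*} (Q : C → C → Prop) (cj ck : C) (P : C → C → Prop) : Prop :=
  IsPref P ∧ Extends P Q ∧ P ck cj

/-- `P ∈ μ(Pi)`: among all preference orders consistent with the transitive closure of
`Q ∪ {(ck, cj)}`, `P` minimizes the swap distance to `Pi`. -/
def InMu {C : Type*} [Fintype C] (Q : C → C → Prop) (cj ck : C)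
    (Pi P : C → C → Prop) : Prop :=
  Feasible Q cj ck P ∧ ∀ R : C → C → Prop, Feasible Q cj ck R → dswap Pi P ≤ dswap Pi R

/-!
A swap-minimal `P' ∈ μ(Pᵢ)` differs from `Pᵢ` only inside the segment `[c_j, Pᵢ, c_k]`:
otherwise the order that follows `P'` inside the segment and `Pᵢ` outside it would still be
feasible and strictly closer to `Pᵢ`. Hence Borda scores change only inside the segment, the
score of `c_j` cannot go up and that of `c_k` cannot go down.

Local dominance, on the other hand, forces the Borda gain `borda P' - borda Pᵢ` to be antitone
along `Pᵢ` on the possible winners: if a lower winner `u` gained relative to a higher one `v`, a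
world in which `u` and `v` are the only contenders, tied up to the tie-breaking order, would have
`v` win under `Pᵢ` and `u` under `P'`. Nor is the gain identically zero on the possible winners,
since then `P'` and `Pᵢ` would have the same outcome in every world. So either `pw₁` gains, and
then lies in the segment but is not `c_j`, or `pw_l` loses, and then lies in the segment but is
not `c_k`; each of these places `c_j` and `c_k` as in one of the three cases.
-/

section Orders

variable {C : Type*} {P : C → C → Prop}

theorem IsPref.asymm (hP : IsPref P) {a b : C} (hab : P a b) : ¬ P b a :=
  fun hba => hP.2.1 a (hP.2.2 a b a hab hba)

theorem IsPref.isStrictTotalOrder (hP : IsPref P) : IsStrictTotalOrder C P where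
  trichotomous a b hab hba := by_contra fun h => (hP.1 a b h).elim hab hba
  irrefl := hP.2.1
  trans := hP.2.2

noncomputable abbrev IsPref.linearOrder (hP : IsPref P) : LinearOrder C :=
  @linearOrderOfSTO C P hP.isStrictTotalOrder (Classical.decRel P)

theorem IsPref.rel_iff_lt (hP : IsPref P) {x y : C} :
    letI := hP.linearOrder; P x y ↔ x < y :=
  Iff.rfl

theorem IsPref.mem_seg_iff (hP : IsPref P) {a b d : C} :
    letI := hP.linearOrder; d ∈ seg P a b ↔ a ≤ d ∧ d ≤ b :=
  and_congr (or_congr_left eq_comm) Iff.rfl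

theorem left_mem_seg {a b : C} (hab : P a b) : a ∈ seg P a b := ⟨Or.inl rfl, Or.inr hab⟩

theorem right_mem_seg {a b : C} (hab : P a b) : b ∈ seg P a b := ⟨Or.inr hab, Or.inl rfl⟩

theorem IsPref.rel_of_notMem_seg_of_rel (hP : IsPref P) {a b x y z : C} (hy : y ∉ seg P a b)
    (hx : x ∈ seg P a b) (hz : z ∈ seg P a b) (hxy : P x y) : P z y := by
  let := hP.linearOrder
  simp only [hP.mem_seg_iff, hP.rel_iff_lt, not_and_or, not_le] at *
  rcases hy with hy | hy <;> order

theorem IsPref.rel_of_notMem_seg_of_rel' (hP : IsPref P) {a b x y z : C} (hx : x ∉ seg P a b)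
    (hy : y ∈ seg P a b) (hz : z ∈ seg P a b) (hxy : P x y) : P x z := by
  let := hP.linearOrder
  simp only [hP.mem_seg_iff, hP.rel_iff_lt, not_and_or, not_le] at *
  rcases hx with hx | hx <;> order

theorem IsPref.cases_of_mem_seg_left (hP : IsPref P) {cj ck top bot : C}
    (htop : top ∈ seg P cj ck \ {cj}) :
    (P cj top ∧ P bot ck) ∨ (P cj top ∧ ck ∈ seg P top bot) := by
  let := hP.linearOrder
  simp only [Set.mem_sdiff, Set.mem_singleton_iff, hP.mem_seg_iff, hP.rel_iff_lt] at *
  have hj : cj < top := lt_of_le_of_ne htop.1.1 (Ne.symm htop.2)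
  rcases lt_or_ge bot ck with h | h
  · exact Or.inl ⟨hj, h⟩
  · exact Or.inr ⟨hj, htop.1.2, h⟩

theorem IsPref.cases_of_mem_seg_right (hP : IsPref P) {cj ck top bot : C}
    (hbot : bot ∈ seg P cj ck \ {ck}) :
    (P cj top ∧ P bot ck) ∨ (P bot ck ∧ cj ∈ seg P top bot) := by
  let := hP.linearOrder
  simp only [Set.mem_sdiff, Set.mem_singleton_iff, hP.mem_seg_iff, hP.rel_iff_lt] at *
  have hk : bot < ck := lt_of_le_of_ne hbot.1.2 hbot.2
  rcases lt_or_ge cj top with h | h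
  · exact Or.inl ⟨h, hk⟩
  · exact Or.inr ⟨hk, h, hbot.1.1⟩

theorem range_subset_seg_of_rel_iff_lt {l : ℕ} (hl : 0 < l) {pw : Fin l → C}
    (horder : ∀ a b : Fin l, P (pw a) (pw b) ↔ a < b) :
    Set.range pw ⊆ seg P (pw ⟨0, hl⟩) (pw ⟨l - 1, Nat.sub_one_lt_of_lt hl⟩) := by
  rintro _ ⟨a, rfl⟩
  constructor
  · rcases Nat.eq_zero_or_pos a with h | h
    · exact Or.inl (congrArg pw (Fin.ext h))
    · exact Or.inr ((horder _ _).2 h)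
  · rcases (Nat.le_sub_one_of_lt a.isLt).eq_or_lt with h | h
    · exact Or.inl (congrArg pw (Fin.ext h))
    · exact Or.inr ((horder _ _).2 h)

end Orders

section Splice

variable {C : Type*} {S : Set C} {P P' : C → C → Prop}

open Classical in
def splice (S : Set C) (P' P : C → C → Prop) : C → C → Prop :=
  fun x y => if x ∈ S ∧ y ∈ S then P' x y else P x y

theorem splice_iff_of_mem {x y : C} (h : x ∈ S ∧ y ∈ S) : splice S P' P x y ↔ P' x y :=
  iff_of_eq (if_pos h)

theorem splice_iff_of_notMem {x y : C} (h : ¬(x ∈ S ∧ y ∈ S)) : splice S P' P x y ↔ P x y :=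
  iff_of_eq (if_neg h)

theorem IsPref.splice_seg (hP : IsPref P) (hP' : IsPref P') (a b : C) :
    IsPref (splice (seg P a b) P' P) := by
  set S := seg P a b
  refine ⟨fun x y hxy => ?_, fun x => ?_, fun x y z hxy hyz => ?_⟩
  · by_cases h : x ∈ S ∧ y ∈ S
    · rw [splice_iff_of_mem h, splice_iff_of_mem h.symm]
      exact hP'.1 x y hxy
    · rw [splice_iff_of_notMem h, splice_iff_of_notMem fun h' => h h'.symm]
      exact hP.1 x y hxy
  · by_cases h : x ∈ S ∧ x ∈ S
    · rw [splice_iff_of_mem h]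
      exact hP'.2.1 x
    · rw [splice_iff_of_notMem h]
      exact hP.2.1 x
  by_cases hxz : x ∈ S ∧ z ∈ S
  · by_cases hy : y ∈ S
    · rw [splice_iff_of_mem hxz]
      exact hP'.2.2 x y z ((splice_iff_of_mem ⟨hxz.1, hy⟩).1 hxy)
        ((splice_iff_of_mem ⟨hy, hxz.2⟩).1 hyz)
    · rw [splice_iff_of_notMem fun h => hy h.2] at hxy
      rw [splice_iff_of_notMem fun h => hy h.1] at hyz
      exact (hP.asymm hyz (hP.rel_of_notMem_seg_of_rel hy hxz.1 hxz.2 hxy)).elim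
  rw [splice_iff_of_notMem hxz]
  by_cases hxy' : x ∈ S ∧ y ∈ S
  · have hz : z ∉ S := fun hz => hxz ⟨hxy'.1, hz⟩
    rw [splice_iff_of_notMem fun h => hz h.2] at hyz
    exact hP.rel_of_notMem_seg_of_rel hz hxy'.2 hxy'.1 hyz
  rw [splice_iff_of_notMem hxy'] at hxy
  by_cases hyz' : y ∈ S ∧ z ∈ S
  · exact hP.rel_of_notMem_seg_of_rel' (fun hx => hxz ⟨hx, hyz'.2⟩) hyz'.1 hyz'.2 hxy
  · rw [splice_iff_of_notMem hyz'] at hyz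
    exact hP.2.2 x y z hxy hyz

theorem dswap_splice_lt [Fintype C] (hP : IsPref P) {a b : C} (hab : P a b) (hba : P' b a)
    (hout : ¬(a ∈ S ∧ b ∈ S)) : dswap P (splice S P' P) < dswap P P' := by
  refine Set.ncard_lt_ncard ((Set.ssubset_iff_of_subset ?_).2 ⟨(a, b), ⟨hab, hba⟩, ?_⟩)
  · rintro ⟨x, y⟩ ⟨hxy, hyx⟩
    refine ⟨hxy, ?_⟩
    by_cases h : y ∈ S ∧ x ∈ S
    · exact (splice_iff_of_mem h).1 hyx
    · exact absurd ((splice_iff_of_notMem h).1 hyx) (hP.asymm hxy)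
  · rintro ⟨-, hba'⟩
    exact hP.asymm hab ((splice_iff_of_notMem fun h => hout h.symm).1 hba')

end Splice

section MinimalChange

variable {C : Type*} {Q Pi P' : C → C → Prop} {cj ck : C}

theorem Feasible.splice_seg (hPi : IsPref Pi) (hPiQ : Extends Pi Q) (hjk : Pi cj ck)
    (hP' : Feasible Q cj ck P') : Feasible Q cj ck (splice (seg Pi cj ck) P' Pi) := by
  refine ⟨hPi.splice_seg hP'.1 cj ck, fun a b hab => ?_, ?_⟩
  · by_cases h : a ∈ seg Pi cj ck ∧ b ∈ seg Pi cj ck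
    · exact (splice_iff_of_mem h).2 (hP'.2.1 a b hab)
    · exact (splice_iff_of_notMem h).2 (hPiQ a b hab)
  · exact (splice_iff_of_mem ⟨right_mem_seg hjk, left_mem_seg hjk⟩).2 hP'.2.2

variable [Fintype C]

theorem InMu.mem_seg_of_flip (hPi : IsPref Pi) (hPiQ : Extends Pi Q) (hjk : Pi cj ck)
    (hmu : InMu Q cj ck Pi P') {a b : C} (hab : Pi a b) (hba : P' b a) :
    a ∈ seg Pi cj ck ∧ b ∈ seg Pi cj ck :=
  by_contra fun hout =>
    (hmu.2 _ (hmu.1.splice_seg hPi hPiQ hjk)).not_gt (dswap_splice_lt hPi hab hba hout)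

theorem InMu.borda_le_of_notMem (hPi : IsPref Pi) (hPiQ : Extends Pi Q) (hjk : Pi cj ck)
    (hmu : InMu Q cj ck Pi P') {c : C} (hc : c ∉ seg Pi cj ck \ {cj}) :
    borda P' c ≤ borda Pi c := by
  refine Nat.add_le_add_left (Set.ncard_le_ncard fun d hd => ?_) 1
  by_contra hnd
  have hcd : c ≠ d := fun h => hmu.1.1.2.1 c (h ▸ hd)
  obtain ⟨hd_seg, hc_seg⟩ :=
    hmu.mem_seg_of_flip hPi hPiQ hjk ((hPi.1 c d hcd).resolve_left hnd) hd
  obtain rfl : c = cj := by_contra fun h => hc ⟨hc_seg, h⟩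
  rcases hd_seg.1 with rfl | h
  · exact hcd rfl
  · exact hnd h

theorem InMu.le_borda_of_notMem (hPi : IsPref Pi) (hPiQ : Extends Pi Q) (hjk : Pi cj ck)
    (hmu : InMu Q cj ck Pi P') {c : C} (hc : c ∉ seg Pi cj ck \ {ck}) :
    borda Pi c ≤ borda P' c := by
  refine Nat.add_le_add_left (Set.ncard_le_ncard fun d hd => ?_) 1
  by_contra hnd
  have hcd : c ≠ d := fun h => hPi.2.1 c (h ▸ hd)
  obtain ⟨hc_seg, hd_seg⟩ :=
    hmu.mem_seg_of_flip hPi hPiQ hjk hd ((hmu.1.1.1 c d hcd).resolve_left hnd)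
  obtain rfl : c = ck := by_contra fun h => hc ⟨hc_seg, h⟩
  rcases hd_seg.2 with rfl | h
  · exact hcd rfl
  · exact hPi.asymm hd h

end MinimalChange

section Dominance

variable {C : Type*} [Fintype C] {tb : C → C → Prop} {PW : Set C} {s : C → ℕ}

theorem one_le_borda (P : C → C → Prop) (c : C) : 1 ≤ borda P c := Nat.le_add_right 1 _

theorem borda_le_card_add_one (P : C → C → Prop) (c : C) : borda P c ≤ Nat.card C + 1 := by
  have := Set.ncard_le_card {c' : C | P c c'}
  unfold borda
  omega

theorem isWinner_of_rival {R : C → C → Prop} {u v : C} (hu : Nat.card C + 1 ≤ s u)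
    (hs : ∀ c, c ≠ u → c ≠ v → s c = 0)
    (hrival : s v + borda R v < s u + borda R u ∨
      (s v + borda R v = s u + borda R u ∧ tb u v)) :
    IsWinner tb s R u := by
  intro c hc
  by_cases hcv : c = v
  · exact hcv ▸ hrival
  · have := borda_le_card_add_one R c
    have := one_le_borda R u
    rw [hs c hc hcv]
    omega

theorem possibleWorld_of_support {u v : C} (hu : u ∈ PW) (hv : v ∈ PW)
    (hbig : Nat.card C + 1 ≤ s u) (hs : ∀ c, c ≠ u → c ≠ v → s c = 0) :
    PossibleWorld tb PW s := by
  intro R _ c hc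
  by_contra hcPW
  have hcu : c ≠ u := fun h => hcPW (h ▸ hu)
  have hcv : c ≠ v := fun h => hcPW (h ▸ hv)
  have hle : s u + borda R u ≤ s c + borda R c :=
    (hc u hcu.symm).elim le_of_lt fun h => h.1.le
  have := borda_le_card_add_one R c
  have := one_le_borda R u
  rw [hs c hcu hcv] at hle
  omega

variable {P P' : C → C → Prop}

theorem LocDom.borda_add_le (htb : IsPref tb) (hP : IsPref P) (hdom : LocDom tb PW P' P)
    {u v : C} (hu : u ∈ PW) (hv : v ∈ PW) (hvu : P v u) :
    borda P' u + borda P v ≤ borda P' v + borda P u := by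
  classical
  by_contra! hgain
  have huv : u ≠ v := fun h => hP.2.1 v (h ▸ hvu)
  -- `v` leads `u` under `P` by the margin `d` that just decides the tie-break in favour of `v`
  obtain ⟨d, hd⟩ : ∃ d : ℕ, (d = 0 ∧ tb v u) ∨ (d = 1 ∧ tb u v) :=
    (htb.1 u v huv).elim (fun h => ⟨1, Or.inr ⟨rfl, h⟩⟩) fun h => ⟨0, Or.inl ⟨rfl, h⟩⟩
  set K := Nat.card C + 1
  let s : C → ℕ := fun c =>
    if c = v then K + d + borda P u else if c = u then K + borda P v else 0
  have hsv : s v = K + d + borda P u := if_pos rfl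
  have hsu : s u = K + borda P v := (if_neg huv).trans (if_pos rfl)
  have hs0 (c : C) (hcu : c ≠ u) (hcv : c ≠ v) : s c = 0 :=
    (if_neg hcv).trans ((if_neg hcu).trans rfl)
  have hwinv : IsWinner tb s P v := by
    refine isWinner_of_rival (by omega) (fun c hcv hcu => hs0 c hcu hcv) ?_
    rcases hd with ⟨rfl, h⟩ | ⟨rfl, -⟩
    · exact Or.inr ⟨by omega, h⟩
    · exact Or.inl (by omega)
  have hwinu : IsWinner tb s P' u := by
    refine isWinner_of_rival (by omega) hs0 ?_
    rcases hd with ⟨rfl, -⟩ | ⟨rfl, h⟩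
    · exact Or.inl (by omega)
    · exact (Nat.lt_or_eq_of_le (by omega)).imp_right fun e => ⟨e, h⟩
  rcases hdom.1 s (possibleWorld_of_support hu hv (by omega) hs0) u v hwinu hwinv with h | h
  · exact huv h
  · exact hP.asymm h hvu

theorem LocDom.exists_borda_ne (htb : IsPref tb) (hP : IsPref P) (hP' : IsPref P')
    (hdom : LocDom tb PW P' P) : ∃ w ∈ PW, borda P' w ≠ borda P w := by
  obtain ⟨s, hs, w', w, hw', hw, hw'w⟩ := hdom.2
  have hne : w' ≠ w := fun h => hP.2.1 w (h ▸ hw'w)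
  by_contra! hsame
  have := hsame w (hs P hP w hw)
  have := hsame w' (hs P' hP' w' hw')
  rcases hw' w hne.symm with h | ⟨h, htb₁⟩ <;> rcases hw w' hne with h' | ⟨h', htb₂⟩ <;>
    first | omega | exact htb.asymm htb₁ htb₂

theorem LocDom.lt_borda_or_borda_lt (htb : IsPref tb) (hP : IsPref P) (hP' : IsPref P')
    (hdom : LocDom tb PW P' P) {top bot : C} (htop : top ∈ PW) (hbot : bot ∈ PW)
    (hPW : PW ⊆ seg P top bot) :
    borda P top < borda P' top ∨ borda P' bot < borda P bot := by
  by_contra! hfix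
  obtain ⟨w, hw, hne⟩ := hdom.exists_borda_ne htb hP hP'
  have hle_top : borda P' w + borda P top ≤ borda P' top + borda P w := by
    rcases (hPW hw).1 with rfl | h
    · exact le_refl _
    · exact hdom.borda_add_le htb hP hw htop h
  have hle_bot : borda P' bot + borda P w ≤ borda P' w + borda P bot := by
    rcases (hPW hw).2 with rfl | h
    · exact le_refl _
    · exact hdom.borda_add_le htb hP hbot hw h
  omega

end Dominance

theorem statement6 {C : Type*} [Fintype C]
    (tb : C → C → Prop) (htb : IsPref tb)
    (Q : C → C → Prop)
    (Pi : C → C → Prop) (hPi : IsPref Pi) (hPiQ : Extends Pi Q)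
    (cj ck : C) (hjk : Pi cj ck)
    (l : ℕ) (hl : 0 < l) (pw : Fin l → C)
    (horder : ∀ a b : Fin l, Pi (pw a) (pw b) ↔ a < b)
    (hman : ∃ P' : C → C → Prop, P' ≠ Pi ∧
      LocDom tb (Set.range pw) P' Pi ∧ InMu Q cj ck Pi P') :
    (Pi cj (pw ⟨0, hl⟩) ∧ Pi (pw ⟨l - 1, by omega⟩) ck) ∨
      (Pi cj (pw ⟨0, hl⟩) ∧ ck ∈ seg Pi (pw ⟨0, hl⟩) (pw ⟨l - 1, by omega⟩)) ∨
      (Pi (pw ⟨l - 1, by omega⟩) ck ∧ cj ∈ seg Pi (pw ⟨0, hl⟩) (pw ⟨l - 1, by omega⟩)) := by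
  obtain ⟨P', -, hdom, hmu⟩ := hman
  rcases hdom.lt_borda_or_borda_lt htb hPi hmu.1.1 ⟨_, rfl⟩ ⟨_, rfl⟩
      (range_subset_seg_of_rel_iff_lt hl horder) with hgain | hloss
  · have htop := by_contra fun h => (hmu.borda_le_of_notMem hPi hPiQ hjk h).not_gt hgain
    exact (hPi.cases_of_mem_seg_left htop).imp_right Or.inl
  · have hbot := by_contra fun h => (hmu.le_borda_of_notMem hPi hPiQ hjk h).not_gt hloss
    exact (hPi.cases_of_mem_seg_right hbot).imp_right Or.inr
end

section
/- Assume the Common Givens: P_i is a preference order on C consistent with Q; the query is the pair (c_j,c_k) with P_i(c_j,c_k); and neither (c_j,c_k) nor (c_k,c_j) belongs to Q. Let P' ∈ μ(P_i), and let c_j', c_k' ∈ C be candidates with P_i(c_j',c_j) and P_i(c_k,c_k'). Then the following set equalities hold: [∞, P_i, c_j'] = [∞, P', c_j'] (i.e. c_j' together with the candidates above c_j' is the same set in P_i and in P'), and [c_k', P_i, −∞] = [c_k', P', −∞] (i.e. c_k' together with the candidates below c_k' is the same set in P_i and in P'). -/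
section

variable {C : Type*}

namespace IsPref

variable {P : C → C → Prop}

theorem irrefl (h : IsPref P) (a : C) : ¬ P a a := h.2.1 a

theorem trans (h : IsPref P) {a b c : C} : P a b → P b c → P a c := h.2.2 a b c

theorem asymm_s9 (h : IsPref P) {a b : C} (hab : P a b) : ¬ P b a :=
  fun hba => h.irrefl a (h.trans hab hba)

theorem total (h : IsPref P) {a b : C} (hab : a ≠ b) : P a b ∨ P b a := h.1 a b hab

theorem flip (h : IsPref P) : IsPref (flip P) :=
  ⟨fun _ _ hab => (h.total hab).symm, h.irrefl, fun _ _ _ hab hbc => h.trans hbc hab⟩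

theorem upperSet_eq {P' : C → C → Prop} (hP : IsPref P) (hP' : IsPref P') {c : C}
    (hinv : ∀ x y, P x y → P' y x → x ≠ c ∧ ¬ P x c) :
    {d : C | d = c ∨ P d c} = {d : C | d = c ∨ P' d c} := by
  ext d
  refine ⟨?_, ?_⟩ <;> rintro (rfl | hdc)
  · exact .inl rfl
  · have hne : d ≠ c := by rintro rfl; exact hP.irrefl d hdc
    exact .inr ((hP'.total hne).resolve_right fun hcd => (hinv d c hdc hcd).2 hdc)
  · exact .inl rfl
  · have hne : d ≠ c := by rintro rfl; exact hP'.irrefl d hdc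
    refine .inr ((hP.total hne).resolve_right fun hcd => ?_)
    exact (hinv c d hcd hdc).1 rfl

end IsPref

def stackAbove (A : Set C) (P R : C → C → Prop) (a b : C) : Prop :=
  (a ∈ A ∧ b ∈ A ∧ P a b) ∨ (a ∈ A ∧ b ∉ A) ∨ (a ∉ A ∧ b ∉ A ∧ R a b)

section stackAbove

variable {A : Set C} {P R : C → C → Prop}

theorem IsPref.stackAbove (hP : IsPref P) (hR : IsPref R) : IsPref (stackAbove A P R) := by
  refine ⟨fun a b hab => ?_, ?_, ?_⟩
  · by_cases ha : a ∈ A <;> by_cases hb : b ∈ A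
    · rcases hP.total hab with h | h <;> simp [_root_.stackAbove, *]
    · simp [_root_.stackAbove, *]
    · simp [_root_.stackAbove, *]
    · rcases hR.total hab with h | h <;> simp [_root_.stackAbove, *]
  · rintro a (⟨-, -, h⟩ | ⟨ha, ha'⟩ | ⟨-, -, h⟩)
    exacts [hP.irrefl a h, ha' ha, hR.irrefl a h]
  · rintro a b c (⟨ha, hb, hab⟩ | ⟨ha, hb⟩ | ⟨ha, hb, hab⟩)
      (⟨hb', hc, hbc⟩ | ⟨hb', hc⟩ | ⟨hb', hc, hbc⟩)
    all_goals first
      | exact absurd hb' hb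
      | exact absurd hb hb'
      | exact .inl ⟨ha, hc, hP.trans hab hbc⟩
      | exact .inr (.inl ⟨ha, hc⟩)
      | exact .inr (.inr ⟨ha, hc, hR.trans hab hbc⟩)

theorem Extends.stackAbove {Q : C → C → Prop} (hP : Extends P Q) (hR : Extends R Q)
    (hA : ∀ x y, y ∈ A → Q x y → x ∈ A) : Extends (stackAbove A P R) Q := by
  intro a b hab
  by_cases ha : a ∈ A <;> by_cases hb : b ∈ A
  · exact .inl ⟨ha, hb, hP a b hab⟩
  · exact .inr (.inl ⟨ha, hb⟩)
  · exact absurd (hA a b hb hab) ha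
  · exact .inr (.inr ⟨ha, hb, hR a b hab⟩)

theorem dswap_stackAbove_lt [Fintype C] (hP : IsPref P) (hA : ∀ x y, y ∈ A → P x y → x ∈ A)
    {x y : C} (hxA : x ∈ A) (hxy : P x y) (hyx : R y x) :
    dswap P (stackAbove A P R) < dswap P R := by
  refine Set.ncard_lt_ncard ⟨?_, fun hsub => ?_⟩
  · rintro ⟨a, b⟩ ⟨hab, ⟨hb, -, hba⟩ | ⟨hb, ha⟩ | ⟨-, -, hba⟩⟩
    exacts [absurd hba (hP.asymm_s9 hab), absurd (hA a b hb hab) ha, ⟨hab, hba⟩]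
  · obtain ⟨-, ⟨-, -, h⟩ | ⟨-, h⟩ | ⟨-, h, -⟩⟩ := hsub (show (x, y) ∈ _ from ⟨hxy, hyx⟩)
    exacts [hP.asymm_s9 hxy h, h hxA, h hxA]

end stackAbove

theorem dswap_flip [Fintype C] (P P' : C → C → Prop) : dswap (flip P) (flip P') = dswap P P' := by
  rw [dswap, dswap, ← Set.ncard_image_of_injective _ Prod.swap_injective,
    Set.image_swap_eq_preimage_swap]
  rfl

namespace InMu

variable [Fintype C] {Q Pi P' : C → C → Prop} {cj ck : C}

theorem flip (hmu : InMu Q cj ck Pi P') : InMu (flip Q) ck cj (flip Pi) (flip P') := by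
  obtain ⟨⟨hP', hP'Q, hkj⟩, hmin⟩ := hmu
  refine ⟨⟨hP'.flip, fun a b h => hP'Q b a h, hkj⟩, fun R ⟨hR, hRQ, hjk⟩ => ?_⟩
  rw [dswap_flip]
  exact (hmin _ ⟨hR.flip, fun a b h => hRQ b a h, hjk⟩).trans_eq
    (dswap_flip Pi (_root_.flip R)).symm

theorem notMem_of_inversion (hmu : InMu Q cj ck Pi P') (hPi : IsPref Pi) (hPiQ : Extends Pi Q)
    {A : Set C} (hA : ∀ x y, y ∈ A → Pi x y → x ∈ A) (hjA : cj ∉ A) (hkA : ck ∉ A)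
    {x y : C} (hxy : Pi x y) (hyx : P' y x) : x ∉ A := by
  obtain ⟨⟨hP', hP'Q, hkj⟩, hmin⟩ := hmu
  intro hxA
  have hfeas : Feasible Q cj ck (stackAbove A Pi P') :=
    ⟨hPi.stackAbove hP', hPiQ.stackAbove hP'Q fun a b hb hab => hA a b hb (hPiQ a b hab),
      .inr (.inr ⟨hkA, hjA, hkj⟩)⟩
  exact (hmin _ hfeas).not_gt (dswap_stackAbove_lt hPi hA hxA hxy hyx)

theorem upperSet_eq (hmu : InMu Q cj ck Pi P') (hPi : IsPref Pi) (hPiQ : Extends Pi Q)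
    (hjk : Pi cj ck) {c : C} (hcj : Pi c cj) :
    {d : C | d = c ∨ Pi d c} = {d : C | d = c ∨ P' d c} := by
  set A : Set C := {d | d = c ∨ Pi d c}
  have hA : ∀ x y, y ∈ A → Pi x y → x ∈ A := by
    rintro x y (rfl | hyc) hxy
    exacts [.inr hxy, .inr (hPi.trans hxy hyc)]
  have hnot : ∀ {e}, Pi c e → e ∉ A := by
    rintro e hce (rfl | hec)
    exacts [hPi.irrefl e hce, hPi.asymm_s9 hce hec]
  refine hPi.upperSet_eq hmu.1.1 fun x y hxy hyx => ?_
  exact not_or.mp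
    (hmu.notMem_of_inversion hPi hPiQ hA (hnot hcj) (hnot (hPi.trans hcj hjk)) hxy hyx)

end InMu

end

theorem statement9_general {C : Type*} [Fintype C]
    (Q : C → C → Prop)
    (Pi : C → C → Prop) (hPi : IsPref Pi) (hPiQ : Extends Pi Q)
    (cj ck : C) (hjk : Pi cj ck)
    (P' : C → C → Prop) (hmu : InMu Q cj ck Pi P')
    (cj' ck' : C) (hcj' : Pi cj' cj) (hck' : Pi ck ck') :
    ({d : C | d = cj' ∨ Pi d cj'} = {d : C | d = cj' ∨ P' d cj'}) ∧
      {d : C | d = ck' ∨ Pi ck' d} = {d : C | d = ck' ∨ P' ck' d} :=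
  ⟨hmu.upperSet_eq hPi hPiQ hjk hcj',
    hmu.flip.upperSet_eq hPi.flip (fun a b h => hPiQ b a h) hjk hck'⟩

theorem statement9 {C : Type*} [Fintype C]
    (Q : C → C → Prop) (hQ : IsSPO Q)
    (Pi : C → C → Prop) (hPi : IsPref Pi) (hPiQ : Extends Pi Q)
    (cj ck : C) (hjk : Pi cj ck) (hQjk : ¬ Q cj ck) (hQkj : ¬ Q ck cj)
    (P' : C → C → Prop) (hmu : InMu Q cj ck Pi P')
    (cj' ck' : C) (hcj' : Pi cj' cj) (hck' : Pi ck ck') :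
    ({d : C | d = cj' ∨ Pi d cj'} = {d : C | d = cj' ∨ P' d cj'}) ∧
      {d : C | d = ck' ∨ Pi ck' d} = {d : C | d = ck' ∨ P' ck' d} :=
  statement9_general Q Pi hPi hPiQ cj ck hjk P' hmu cj' ck' hcj' hck'
end
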